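/- arXiv:2101.08115 — 3 statements merged into one kernel-verified Lean document; each statement's English description precedes it below -/
import Mathlib

section
/- Let n ≥ 1 and let A = (a_{ij}) be a real n×n matrix. Let (u_1,…,u_n) be a radial solution of the Liouville system on (0,∞) such that for each i: lim_{r→0+} r·u_i'(r) = 0 and the function r ↦ r·e^{u_i(r)} is integrable on (0,∞). Set m_i = ∫_0^∞ (∑_{j=1}^n a_{ij} e^{u_j(r)}) r dr and m = min_i m_i, and assume m > 2. Assume further that there exist constants L_1,…,L_n ∈ ℝ, δ₀ ∈ (0,1) and C₀ > 0 such that |u_i(r) + m_i·log r − L_i| ≤ C₀·r^{−δ₀} for all r ≥ 1 and all i. Then there exist δ > 0 and C > 0 such that for all r ≥ 1 and all i = 1,…,n: |u_i(r) + m_i·log r − L_i + ∑_{j=1}^n (a_{ij}/(m_j−2)²)·e^{L_j}·r^{2−m_j}| ≤ C·r^{2−m−δ}. -/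
/-!
Integrating `(r u_i')' = -r ∑_j a_ij e^{u_j}` from `0`, where `r u_i' → 0`, shows that
`v_i = u_i + m_i log r - L_i` satisfies `r v_i' = ∫_r^∞ s ∑_j a_ij e^{u_j(s)} ds`. The hypothesis
`v_j = O(r^{-δ₀})` gives `s e^{u_j(s)} = e^{L_j} s^{1-m_j} + O(s^{1-m-δ₀})`, so this tail equals
`∑_j a_ij e^{L_j} r^{2-m_j}/(m_j-2) + O(r^{2-m-δ₀})`. Hence the error
`v_i + ∑_j a_ij e^{L_j} r^{2-m_j}/(m_j-2)²` has derivative `O(r^{1-m-δ₀})`; since it tends to `0`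
at infinity, it is `O(r^{2-m-δ₀})`, and `δ = δ₀` works.
-/

open MeasureTheory Filter

/-- `(u_1,…,u_n)` is a radial solution of the Liouville system
`u_i'' + u_i'/r = -∑_j a_{ij} e^{u_j}` on the set `J ⊆ (0,∞)`. -/
def IsRadialSolution {n : ℕ} (A : Fin n → Fin n → ℝ) (u : Fin n → ℝ → ℝ) (J : Set ℝ) : Prop :=
  ∀ i : Fin n, ∀ r ∈ J,
    DifferentiableAt ℝ (u i) r ∧ DifferentiableAt ℝ (deriv (u i)) r ∧
    deriv (deriv (u i)) r + deriv (u i) r / r = -∑ j, A i j * Real.exp (u j r)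

open Real Set Topology

lemma Real.abs_exp_sub_one_le_abs_mul_exp_abs (x : ℝ) : |exp x - 1| ≤ |x| * exp |x| := by
  rcases le_or_gt 0 x with hx | hx
  · rw [abs_of_nonneg hx, abs_of_nonneg (by linarith [one_le_exp hx])]
    nlinarith [add_one_le_exp (-x), exp_neg x, mul_inv_cancel₀ (exp_pos x).ne', exp_pos x]
  · rw [abs_of_neg hx, abs_of_nonpos (by linarith [exp_lt_one_iff.mpr hx])]
    nlinarith [add_one_le_exp x, one_le_exp (neg_pos.mpr hx).le]

lemma integrableOn_Ioi_rpow_one_sub {q t : ℝ} (hq : 2 < q) (ht : 0 < t) :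
    IntegrableOn (fun s => s ^ (1 - q)) (Ioi t) :=
  integrableOn_Ioi_rpow_of_lt (by linarith) ht

lemma integral_Ioi_rpow_one_sub {q t : ℝ} (hq : 2 < q) (ht : 0 < t) :
    ∫ s in Ioi t, s ^ (1 - q) = t ^ (2 - q) / (q - 2) := by
  rw [integral_Ioi_rpow_of_lt (by linarith) ht, show 1 - q + 1 = 2 - q by ring, neg_div,
    ← div_neg, neg_sub]

lemma abs_integral_Ioi_sub_le {f : ℝ → ℝ} {c K q p t : ℝ} (ht : 0 < t) (hq : 2 < q) (hp : 2 < p)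
    (hf : IntegrableOn f (Ioi t)) (hbound : ∀ s > t, |f s - c * s ^ (1 - q)| ≤ K * s ^ (1 - p)) :
    |(∫ s in Ioi t, f s) - c * (t ^ (2 - q) / (q - 2))| ≤ K * (t ^ (2 - p) / (p - 2)) := by
  have hc : c * (t ^ (2 - q) / (q - 2)) = ∫ s in Ioi t, c * s ^ (1 - q) := by
    rw [integral_const_mul, integral_Ioi_rpow_one_sub hq ht]
  have hK : K * (t ^ (2 - p) / (p - 2)) = ∫ s in Ioi t, K * s ^ (1 - p) := by
    rw [integral_const_mul, integral_Ioi_rpow_one_sub hp ht]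
  rw [hc, hK, ← integral_sub hf ((integrableOn_Ioi_rpow_one_sub hq ht).const_mul c),
    ← norm_eq_abs]
  refine norm_integral_le_of_norm_le ((integrableOn_Ioi_rpow_one_sub hp ht).const_mul K) ?_
  filter_upwards [ae_restrict_mem measurableSet_Ioi] with s hs
  exact (norm_eq_abs _).trans_le (hbound s hs)

lemma nonneg_of_hasDerivAt_nonpos_of_tendsto_zero {f f' : ℝ → ℝ} {r : ℝ}
    (hf : ∀ s ≥ r, HasDerivAt f (f' s) s) (hf' : ∀ s ≥ r, f' s ≤ 0)
    (hlim : Tendsto f atTop (𝓝 0)) : 0 ≤ f r := by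
  have hanti : AntitoneOn f (Ici r) := by
    refine antitoneOn_of_deriv_nonpos (convex_Ici r)
      (fun s hs => (hf s hs).continuousAt.continuousWithinAt)
      (fun s hs => (hf s (interior_subset hs)).differentiableAt.differentiableWithinAt)
      (fun s hs => ?_)
    rw [(hf s (interior_subset hs)).deriv]
    exact hf' s (interior_subset hs)
  exact le_of_tendsto hlim ((eventually_ge_atTop r).mono fun s hs => hanti self_mem_Ici hs hs)

/-- Comparison with `s ↦ K s^(2-q)/(q-2)`, whose derivative is `-K s^(1-q)`. -/
lemma abs_le_of_abs_hasDerivAt_le_rpow_of_tendsto_zero {f f' : ℝ → ℝ} {K q r : ℝ} (hr : 0 < r)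
    (hq : 2 < q) (hf : ∀ s ≥ r, HasDerivAt f (f' s) s) (hf' : ∀ s ≥ r, |f' s| ≤ K * s ^ (1 - q))
    (hlim : Tendsto f atTop (𝓝 0)) : |f r| ≤ K * (r ^ (2 - q) / (q - 2)) := by
  set g : ℝ → ℝ := fun s => K * (s ^ (2 - q) / (q - 2))
  have hg : ∀ s ≥ r, HasDerivAt g (-(K * s ^ (1 - q))) s := fun s hs => by
    have h := ((hasDerivAt_rpow_const (p := 2 - q) (Or.inl (hr.trans_le hs).ne')).div_const
      (q - 2)).const_mul K
    refine h.congr_deriv ?_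
    rw [show 2 - q - 1 = 1 - q by ring]
    field_simp [show q - 2 ≠ 0 by linarith]
    ring
  have hglim : Tendsto g atTop (𝓝 0) := by
    have h := ((tendsto_rpow_neg_atTop (y := q - 2) (by linarith)).div_const (q - 2)).const_mul K
    simpa only [neg_sub, zero_div, mul_zero] using h
  rw [abs_le]
  constructor
  · have := nonneg_of_hasDerivAt_nonpos_of_tendsto_zero (f := fun s => g s + f s)
      (fun s hs => (hg s hs).add (hf s hs))
      (fun s hs => by linarith [(abs_le.mp (hf' s hs)).2]) (by simpa using hglim.add hlim)
    linarith
  · have := nonneg_of_hasDerivAt_nonpos_of_tendsto_zero (f := fun s => g s - f s)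
      (fun s hs => (hg s hs).sub (hf s hs))
      (fun s hs => by linarith [(abs_le.mp (hf' s hs)).1]) (by simpa using hglim.sub hlim)
    linarith

lemma abs_mul_exp_sub_exp_mul_rpow_le {s x μ ν L C δ : ℝ} (hs : 1 ≤ s) (hC : 0 ≤ C)
    (hδ : 0 ≤ δ) (hνμ : ν ≤ μ) (hx : |x + μ * log s - L| ≤ C * s ^ (-δ)) :
    |s * exp x - exp L * s ^ (1 - μ)| ≤ C * exp C * exp L * s ^ (1 - (ν + δ)) := by
  have hs0 : 0 < s := one_pos.trans_le hs
  have hsplit : s * exp x = exp L * s ^ (1 - μ) * exp (x + μ * log s - L) := by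
    conv_lhs => rw [← exp_log hs0]
    rw [rpow_def_of_pos hs0, ← exp_add, ← exp_add, ← exp_add]
    ring_nf
  set v := x + μ * log s - L
  have hv : |v| ≤ C * s ^ (-δ) := hx
  have hv1 : |v| ≤ C :=
    hv.trans (mul_le_of_le_one_right hC (rpow_le_one_of_one_le_of_nonpos hs (by linarith)))
  have hexp_v : |exp v - 1| ≤ C * s ^ (-δ) * exp C :=
    (abs_exp_sub_one_le_abs_mul_exp_abs v).trans (by gcongr)
  rw [hsplit, ← mul_sub_one, abs_mul, abs_of_pos (by positivity)]
  calc exp L * s ^ (1 - μ) * |exp v - 1| ≤ exp L * s ^ (1 - ν) * (C * s ^ (-δ) * exp C) := by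
        gcongr
    _ = C * exp C * exp L * s ^ (1 - (ν + δ)) := by
        rw [show 1 - (ν + δ) = 1 - ν + -δ by ring, rpow_add hs0]
        ring

section

variable {n : ℕ} {A : Fin n → Fin n → ℝ} {u : Fin n → ℝ → ℝ} {S : Set ℝ}

lemma sum_mul_exp_mul_eq_sum (i : Fin n) (s : ℝ) :
    (∑ j, A i j * exp (u j s)) * s = ∑ j, A i j * (s * exp (u j s)) := by
  rw [Finset.sum_mul]
  exact Finset.sum_congr rfl fun j _ => by ring

lemma integrableOn_sum_mul_exp_mul (hint : ∀ j, IntegrableOn (fun s => s * exp (u j s)) S)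
    (i : Fin n) : IntegrableOn (fun s => (∑ j, A i j * exp (u j s)) * s) S := by
  simp_rw [sum_mul_exp_mul_eq_sum]
  exact integrable_finsetSum _ fun j _ => (hint j).const_mul _

lemma integral_sum_mul_exp_mul (hint : ∀ j, IntegrableOn (fun s => s * exp (u j s)) S)
    (i : Fin n) :
    ∫ s in S, (∑ j, A i j * exp (u j s)) * s = ∑ j, A i j * ∫ s in S, s * exp (u j s) := by
  simp_rw [sum_mul_exp_mul_eq_sum, ← integral_const_mul]
  exact integral_finsetSum _ fun j _ => (hint j).const_mul _

lemma abs_integral_Ioi_sum_mul_exp_mul_sub_le {μ L K : Fin n → ℝ} {p t : ℝ}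
    (hint : ∀ j, IntegrableOn (fun s => s * exp (u j s)) (Ioi 0)) (hμ : ∀ j, 2 < μ j) (hp : 2 < p)
    (hpt : ∀ j, ∀ s ≥ 1, |s * exp (u j s) - exp (L j) * s ^ (1 - μ j)| ≤ K j * s ^ (1 - p))
    (i : Fin n) (ht : 1 ≤ t) :
    |(∫ s in Ioi t, (∑ j, A i j * exp (u j s)) * s) -
        ∑ j, A i j * (exp (L j) * (t ^ (2 - μ j) / (μ j - 2)))|
      ≤ (∑ j, |A i j| * K j) * (t ^ (2 - p) / (p - 2)) := by
  have ht0 : 0 < t := one_pos.trans_le ht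
  have hint' : ∀ j, IntegrableOn (fun s => s * exp (u j s)) (Ioi t) :=
    fun j => (hint j).mono_set (Ioi_subset_Ioi ht0.le)
  rw [integral_sum_mul_exp_mul hint' i, ← Finset.sum_sub_distrib, Finset.sum_mul]
  refine (Finset.abs_sum_le_sum_abs _ _).trans (Finset.sum_le_sum fun j _ => ?_)
  rw [← mul_sub, abs_mul, mul_assoc]
  gcongr
  exact abs_integral_Ioi_sub_le ht0 (hμ j) hp (hint' j)
    fun s hs => hpt j s (ht.trans hs.le)

lemma hasDerivAt_sum_div_sq_mul_rpow (μ L : Fin n → ℝ) (hμ : ∀ j, μ j ≠ 2) (i : Fin n) {r : ℝ}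
    (hr : 0 < r) :
    HasDerivAt (fun r => ∑ j, A i j / (μ j - 2) ^ 2 * exp (L j) * r ^ (2 - μ j))
      (-(∑ j, A i j * (exp (L j) * (r ^ (2 - μ j) / (μ j - 2)))) / r) r := by
  have h := HasDerivAt.sum (u := Finset.univ) fun j _ =>
    ((hasDerivAt_rpow_const (p := 2 - μ j) (Or.inl hr.ne')).const_mul
      (A i j / (μ j - 2) ^ 2 * exp (L j)))
  refine (h.congr_deriv ?_).congr_of_eventuallyEq ?_
  · rw [neg_div, Finset.sum_div, ← Finset.sum_neg_distrib]
    refine Finset.sum_congr rfl fun j _ => ?_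
    have hμj : μ j - 2 ≠ 0 := sub_ne_zero.mpr (hμ j)
    rw [rpow_sub_one hr.ne']
    field_simp
    ring
  · exact Eventually.of_forall fun s => by simp

lemma tendsto_sum_div_sq_mul_rpow (μ L : Fin n → ℝ) (hμ : ∀ j, 2 < μ j) (i : Fin n) :
    Tendsto (fun r => ∑ j, A i j / (μ j - 2) ^ 2 * exp (L j) * r ^ (2 - μ j)) atTop (𝓝 0) := by
  have h := tendsto_finsetSum Finset.univ fun j _ =>
    (tendsto_rpow_neg_atTop (sub_pos.mpr (hμ j))).const_mul (A i j / (μ j - 2) ^ 2 * exp (L j))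
  simpa only [neg_sub, mul_zero, Finset.sum_const_zero] using h

end

namespace IsRadialSolution

variable {n : ℕ} {A : Fin n → Fin n → ℝ} {u : Fin n → ℝ → ℝ}

lemma hasDerivAt_mul_deriv {J : Set ℝ} (hsol : IsRadialSolution A u J) (i : Fin n) {r : ℝ}
    (hr : r ∈ J) (hr0 : r ≠ 0) :
    HasDerivAt (fun s => s * deriv (u i) s) (-((∑ j, A i j * exp (u j r)) * r)) r := by
  obtain ⟨-, hd, hode⟩ := hsol i r hr
  refine ((hasDerivAt_id r).mul hd.hasDerivAt).congr_deriv ?_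
  rw [eq_sub_of_add_eq hode, id, mul_sub, mul_div_cancel₀ _ hr0]
  ring

lemma mul_deriv_eq_neg_integral (hsol : IsRadialSolution A u (Ioi 0)) (i : Fin n)
    (hlim0 : Tendsto (fun r => r * deriv (u i) r) (𝓝[>] 0) (𝓝 0))
    (hint : IntegrableOn (fun s => (∑ j, A i j * exp (u j s)) * s) (Ioi 0)) {b : ℝ} (hb : 0 < b) :
    b * deriv (u i) b = -∫ s in Ioc 0 b, (∑ j, A i j * exp (u j s)) * s := by
  have hcont : ContinuousOn (fun s => s * deriv (u i) s) (Icc 0 b) := by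
    intro s hs
    rcases hs.1.eq_or_lt with rfl | hs0
    · have h0 : ContinuousWithinAt (fun s => s * deriv (u i) s) (Ioi 0) 0 := by
        simpa [ContinuousWithinAt] using hlim0
      exact (continuousWithinAt_Ioi_iff_Ici.mp h0).mono Icc_subset_Ici_self
    · exact (hsol.hasDerivAt_mul_deriv i hs0 hs0.ne').continuousAt.continuousWithinAt
  have hftc := intervalIntegral.integral_eq_sub_of_hasDerivAt_of_le hb.le hcont
    (fun s hs => hsol.hasDerivAt_mul_deriv i hs.1 hs.1.ne')
    ((intervalIntegrable_iff_integrableOn_Ioc_of_le hb.le).mpr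
      (hint.mono_set Ioc_subset_Ioi_self).neg)
  rw [intervalIntegral.integral_of_le hb.le, integral_neg, zero_mul, sub_zero] at hftc
  exact hftc.symm

lemma hasDerivAt_add_mul_log (hsol : IsRadialSolution A u (Ioi 0)) (i : Fin n)
    (hlim0 : Tendsto (fun r => r * deriv (u i) r) (𝓝[>] 0) (𝓝 0))
    (hint : IntegrableOn (fun s => (∑ j, A i j * exp (u j s)) * s) (Ioi 0)) {μ : ℝ}
    (hμ : μ = ∫ s in Ioi 0, (∑ j, A i j * exp (u j s)) * s) {r : ℝ} (hr : 0 < r) :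
    HasDerivAt (fun s => u i s + μ * log s)
      ((∫ s in Ioi r, (∑ j, A i j * exp (u j s)) * s) / r) r := by
  refine ((hsol i r hr).1.hasDerivAt.add ((hasDerivAt_log hr.ne').const_mul μ)).congr_deriv ?_
  have hsplit : μ = (∫ s in Ioc 0 r, (∑ j, A i j * exp (u j s)) * s) +
      ∫ s in Ioi r, (∑ j, A i j * exp (u j s)) * s := by
    rw [hμ, ← Ioc_union_Ioi_eq_Ioi hr.le, setIntegral_union Ioc_disjoint_Ioi_same measurableSet_Ioi
      (hint.mono_set Ioc_subset_Ioi_self) (hint.mono_set (Ioi_subset_Ioi hr.le))]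
  have hflux := hsol.mul_deriv_eq_neg_integral i hlim0 hint hr
  field_simp
  linarith

lemma abs_add_sum_div_sq_mul_rpow_le (hsol : IsRadialSolution A u (Ioi 0)) (i : Fin n)
    (hlim0 : Tendsto (fun r => r * deriv (u i) r) (𝓝[>] 0) (𝓝 0))
    (hint : ∀ j, IntegrableOn (fun r => r * exp (u j r)) (Ioi 0)) {μ L K : Fin n → ℝ} {p : ℝ}
    (hμi : μ i = ∫ r in Ioi 0, (∑ j, A i j * exp (u j r)) * r) (hμ : ∀ j, 2 < μ j)
    (hv : Tendsto (fun r => u i r + μ i * log r - L i) atTop (𝓝 0)) (hp : 2 < p)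
    (hpt : ∀ j, ∀ s ≥ 1, |s * exp (u j s) - exp (L j) * s ^ (1 - μ j)| ≤ K j * s ^ (1 - p))
    {r : ℝ} (hr : 1 ≤ r) :
    |u i r + μ i * log r - L i + ∑ j, A i j / (μ j - 2) ^ 2 * exp (L j) * r ^ (2 - μ j)|
      ≤ (∑ j, |A i j| * K j) / (p - 2) ^ 2 * r ^ (2 - p) := by
  have hderiv : ∀ s ≥ r, HasDerivAt
      (fun s => u i s + μ i * log s - L i + ∑ j, A i j / (μ j - 2) ^ 2 * exp (L j) * s ^ (2 - μ j))
      (((∫ t in Ioi s, (∑ j, A i j * exp (u j t)) * t) -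
        ∑ j, A i j * (exp (L j) * (s ^ (2 - μ j) / (μ j - 2)))) / s) s := fun s hs => by
    have hs0 : 0 < s := by linarith
    refine (((hsol.hasDerivAt_add_mul_log i hlim0 (integrableOn_sum_mul_exp_mul hint i) hμi
      hs0).sub_const (L i)).add
      (hasDerivAt_sum_div_sq_mul_rpow μ L (fun j => (hμ j).ne') i hs0)).congr_deriv ?_
    ring
  have hbound : ∀ s ≥ r, |((∫ t in Ioi s, (∑ j, A i j * exp (u j t)) * t) -
      ∑ j, A i j * (exp (L j) * (s ^ (2 - μ j) / (μ j - 2)))) / s|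
        ≤ (∑ j, |A i j| * K j) / (p - 2) * s ^ (1 - p) := fun s hs => by
    have hs0 : 0 < s := by linarith
    rw [abs_div, abs_of_pos hs0, div_le_iff₀ hs0]
    calc _ ≤ (∑ j, |A i j| * K j) * (s ^ (2 - p) / (p - 2)) :=
          abs_integral_Ioi_sum_mul_exp_mul_sub_le hint hμ hp hpt i (hr.trans hs)
      _ = _ := by
          rw [show 2 - p = 1 - p + 1 by ring, rpow_add_one hs0.ne']
          ring
  have hlim := hv.add (tendsto_sum_div_sq_mul_rpow (A := A) μ L hμ i)
  rw [add_zero] at hlim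
  calc _ ≤ (∑ j, |A i j| * K j) / (p - 2) * (r ^ (2 - p) / (p - 2)) :=
        abs_le_of_abs_hasDerivAt_le_rpow_of_tendsto_zero (by linarith) hp hderiv hbound hlim
    _ = _ := by rw [sq, ← div_div]; ring

end IsRadialSolution

theorem refined_expansion_of_radial_solutions_general
    (n : ℕ) (A : Fin n → Fin n → ℝ) (u : Fin n → ℝ → ℝ)
    (hsol : IsRadialSolution A u (Set.Ioi 0))
    (hlim0 : ∀ i, Tendsto (fun r => r * deriv (u i) r) (nhdsWithin 0 (Set.Ioi 0)) (nhds 0))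
    (hint : ∀ i, IntegrableOn (fun r => r * Real.exp (u i r)) (Set.Ioi 0))
    (mi : Fin n → ℝ)
    (hmi : ∀ i, mi i = ∫ r in Set.Ioi (0:ℝ), (∑ j, A i j * Real.exp (u j r)) * r)
    (m : ℝ) (hm_le : ∀ i, m ≤ mi i) (hm2 : 2 < m)
    (L : Fin n → ℝ) (δ₀ C₀ : ℝ) (hδ₀ : δ₀ ∈ Set.Ioo (0:ℝ) 1) (hC₀ : 0 < C₀)
    (hexp : ∀ i, ∀ r : ℝ, 1 ≤ r → |u i r + mi i * Real.log r - L i| ≤ C₀ * r ^ (-δ₀)) :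
    ∃ δ > (0:ℝ), ∃ C > (0:ℝ), ∀ r : ℝ, 1 ≤ r → ∀ i,
      |u i r + mi i * Real.log r - L i +
          ∑ j, (A i j / (mi j - 2) ^ 2) * Real.exp (L j) * r ^ (2 - mi j)|
        ≤ C * r ^ (2 - m - δ) := by
  obtain ⟨hδ0, -⟩ := hδ₀
  have hmi2 : ∀ j, 2 < mi j := fun j => hm2.trans_le (hm_le j)
  have hp : 2 < m + δ₀ := by linarith
  have hpt : ∀ j, ∀ s ≥ 1, |s * exp (u j s) - exp (L j) * s ^ (1 - mi j)|
      ≤ C₀ * exp C₀ * exp (L j) * s ^ (1 - (m + δ₀)) := fun j s hs =>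
    abs_mul_exp_sub_exp_mul_rpow_le hs hC₀.le hδ0.le (hm_le j) (hexp j s hs)
  have hv : ∀ i, Tendsto (fun r => u i r + mi i * log r - L i) atTop (𝓝 0) := fun i =>
    squeeze_zero_norm' ((eventually_ge_atTop 1).mono fun r hr => hexp i r hr)
      (by simpa using (tendsto_rpow_neg_atTop hδ0).const_mul C₀)
  set c : Fin n → ℝ := fun i => (∑ j, |A i j| * (C₀ * exp C₀ * exp (L j))) / (m + δ₀ - 2) ^ 2
  have hc : ∀ i, 0 ≤ c i := fun i => by
    have := hC₀.le
    positivity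
  refine ⟨δ₀, hδ0, ∑ i, c i + 1, by positivity, fun r hr i => ?_⟩
  calc _ ≤ c i * r ^ (2 - (m + δ₀)) :=
        hsol.abs_add_sum_div_sq_mul_rpow_le i (hlim0 i) hint (hmi i) hmi2 (hv i) hp hpt hr
    _ ≤ (∑ i, c i + 1) * r ^ (2 - m - δ₀) := by
        rw [show 2 - (m + δ₀) = 2 - m - δ₀ by ring]
        gcongr
        linarith [Finset.single_le_sum (fun j _ => hc j) (Finset.mem_univ i)]

theorem refined_expansion_of_radial_solutions
    (n : ℕ) (hn : 1 ≤ n) (A : Fin n → Fin n → ℝ) (u : Fin n → ℝ → ℝ)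
    (hsol : IsRadialSolution A u (Set.Ioi 0))
    (hlim0 : ∀ i, Tendsto (fun r => r * deriv (u i) r) (nhdsWithin 0 (Set.Ioi 0)) (nhds 0))
    (hint : ∀ i, IntegrableOn (fun r => r * Real.exp (u i r)) (Set.Ioi 0))
    (mi : Fin n → ℝ)
    (hmi : ∀ i, mi i = ∫ r in Set.Ioi (0:ℝ), (∑ j, A i j * Real.exp (u j r)) * r)
    (m : ℝ) (hm_le : ∀ i, m ≤ mi i) (hm_min : ∃ i, mi i = m) (hm2 : 2 < m)
    (L : Fin n → ℝ) (δ₀ C₀ : ℝ) (hδ₀ : δ₀ ∈ Set.Ioo (0:ℝ) 1) (hC₀ : 0 < C₀)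
    (hexp : ∀ i, ∀ r : ℝ, 1 ≤ r → |u i r + mi i * Real.log r - L i| ≤ C₀ * r ^ (-δ₀)) :
    ∃ δ > (0:ℝ), ∃ C > (0:ℝ), ∀ r : ℝ, 1 ≤ r → ∀ i,
      |u i r + mi i * Real.log r - L i +
          ∑ j, (A i j / (mi j - 2) ^ 2) * Real.exp (L j) * r ^ (2 - mi j)|
        ≤ C * r ^ (2 - m - δ) :=
  refined_expansion_of_radial_solutions_general n A u hsol hlim0 hint mi hmi m hm_le hm2 L δ₀ C₀ hδ₀
    hC₀ hexp
end

section
/- Let τ ∈ (0,1), C₀ > 0 and let f : ℝ² → ℝ be measurable with |f(y)| ≤ C₀·(1+|y|)^{−2−τ} for all y ∈ ℝ². Then for every δ ∈ (0, τ) there exists C > 0 such that for every x ∈ ℝ² with |x| ≥ 2, the function y ↦ (log|x−y| − log|x|)·f(y) is Lebesgue integrable on ℝ² and |∫_{ℝ²} (log|x−y| − log|x|)·f(y) dy| ≤ C·|x|^{−δ}. -/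
/-!
Write `b = ‖x‖` and `c = ‖y‖`. Where `2c ≤ b`, the ratio `‖x - y‖ / b` lies within `c / b` of `1`,
so the kernel `log ‖x - y‖ - log b` is `O((c / b) ^ δ)`. Where `b ≤ 2c`, both logarithms are
`O((1 + c) ^ ε)` for any small `ε > 0`, apart from the singularity `log⁺ ‖x - y‖⁻¹`, while
`b ^ (-δ) (1 + c) ^ δ` stays above `1 / 2`. Hence the integrand is dominated by `b ^ (-δ)` times an
integrable power of `1 + c` plus a translate of `log⁺ ‖·‖⁻¹`, whose integrals do not depend on `x`.
-/

open MeasureTheory Real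

namespace Real

lemma abs_log_le_two_mul_abs_sub_one {r : ℝ} (hr : 1 / 2 ≤ r) : |log r| ≤ 2 * |r - 1| := by
  have hr0 : 0 < r := by linarith
  have hupper := log_le_sub_one_of_pos hr0
  have hlower := one_sub_inv_le_log_of_pos hr0
  have hinv : r⁻¹ - 1 ≤ 2 * |r - 1| := by
    rw [inv_eq_one_div, div_sub_one hr0.ne', div_le_iff₀ hr0]
    cases abs_cases (r - 1) <;> nlinarith
  rw [abs_le]
  constructor <;> cases abs_cases (r - 1) <;> linarith

lemma abs_log_eq_posLog_add_posLog_inv (x : ℝ) : |log x| = log⁺ x + log⁺ x⁻¹ := by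
  rw [posLog_apply, posLog_apply, log_inv, max_comm, max_comm 0,
    max_zero_add_max_neg_zero_eq_abs_self]

lemma posLog_le_rpow_div {x ε : ℝ} (hx : 0 ≤ x) (hε : 0 < ε) : log⁺ x ≤ x ^ ε / ε :=
  max_le (by positivity) (log_le_rpow_div hx hε)

lemma posLog_le_mul_rpow_div {x k s ε : ℝ} (hx : 0 ≤ x) (hxs : x ≤ k * s) (hk : 1 ≤ k)
    (hs : 0 ≤ s) (hε : 0 < ε) (hε1 : ε ≤ 1) : log⁺ x ≤ k * s ^ ε / ε := calc
  log⁺ x ≤ log⁺ (k * s) := posLog_le_posLog hx hxs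
  _ ≤ (k * s) ^ ε / ε := posLog_le_rpow_div (by positivity) hε
  _ = k ^ ε * s ^ ε / ε := by rw [mul_rpow (by linarith) hs]
  _ ≤ k * s ^ ε / ε := by
    gcongr
    exact rpow_le_self_of_one_le hk hε1

end Real

section NormedGroup

variable {E : Type*} [SeminormedAddCommGroup E] {x y : E} {δ ε : ℝ}

lemma abs_log_norm_sub_sub_log_norm_le_of_two_mul_norm_le (hδ1 : δ ≤ 1)
    (hx : 0 < ‖x‖) (hy : 2 * ‖y‖ ≤ ‖x‖) :
    |log ‖x - y‖ - log ‖x‖| ≤ 2 * (‖y‖ / ‖x‖) ^ δ := by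
  have hxy : ‖x‖ - ‖y‖ ≤ ‖x - y‖ := norm_sub_norm_le x y
  have hdist : |‖x - y‖ - ‖x‖| ≤ ‖y‖ := by
    simpa using abs_norm_sub_norm_le (x - y) x
  have hratio : ‖y‖ / ‖x‖ ≤ 1 := by rw [div_le_one hx]; linarith
  calc |log ‖x - y‖ - log ‖x‖| = |log (‖x - y‖ / ‖x‖)| := by
        rw [log_div (by linarith) hx.ne']
    _ ≤ 2 * |‖x - y‖ / ‖x‖ - 1| :=
        abs_log_le_two_mul_abs_sub_one (by rw [le_div_iff₀ hx]; linarith)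
    _ = 2 * (|‖x - y‖ - ‖x‖| / ‖x‖) := by
        rw [div_sub_one hx.ne', abs_div, abs_of_pos hx]
    _ ≤ 2 * (‖y‖ / ‖x‖) := by gcongr
    _ ≤ 2 * (‖y‖ / ‖x‖) ^ δ := by
        gcongr
        exact self_le_rpow_of_le_one (by positivity) hratio hδ1

lemma abs_log_norm_sub_sub_log_norm_le_of_norm_le_two_mul (hε0 : 0 < ε) (hε1 : ε ≤ 1)
    (hx : 1 ≤ ‖x‖) (hy : ‖x‖ ≤ 2 * ‖y‖) :
    |log ‖x - y‖ - log ‖x‖| ≤ 5 * (1 + ‖y‖) ^ ε / ε + log⁺ ‖x - y‖⁻¹ := by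
  have hxy : ‖x - y‖ ≤ ‖x‖ + ‖y‖ := norm_sub_le x y
  have hlogx : log⁺ ‖x‖⁻¹ = 0 := by
    rw [posLog_eq_zero_iff, abs_inv, abs_norm]
    exact inv_le_one_of_one_le₀ hx
  have hx' : log⁺ ‖x‖ ≤ 2 * (1 + ‖y‖) ^ ε / ε :=
    posLog_le_mul_rpow_div (norm_nonneg _) (by linarith) (by norm_num) (by positivity) hε0 hε1
  have hxy' : log⁺ ‖x - y‖ ≤ 3 * (1 + ‖y‖) ^ ε / ε :=
    posLog_le_mul_rpow_div (norm_nonneg _) (by linarith) (by norm_num) (by positivity) hε0 hε1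
  calc |log ‖x - y‖ - log ‖x‖| ≤ |log ‖x - y‖| + |log ‖x‖| := abs_sub _ _
    _ = log⁺ ‖x - y‖ + log⁺ ‖x - y‖⁻¹ + (log⁺ ‖x‖ + log⁺ ‖x‖⁻¹) := by
        rw [abs_log_eq_posLog_add_posLog_inv, abs_log_eq_posLog_add_posLog_inv]
    _ ≤ 5 * (1 + ‖y‖) ^ ε / ε + log⁺ ‖x - y‖⁻¹ := by
        rw [hlogx, show (5 : ℝ) = 3 + 2 by norm_num, add_mul, add_div]
        linarith

lemma abs_log_norm_sub_sub_log_norm_le (hδ0 : 0 ≤ δ) (hδ1 : δ ≤ 1) (hε0 : 0 < ε) (hε1 : ε ≤ 1)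
    (hx : 1 ≤ ‖x‖) :
    |log ‖x - y‖ - log ‖x‖| ≤
      ‖x‖ ^ (-δ) * (1 + ‖y‖) ^ δ * (10 / ε * (1 + ‖y‖) ^ ε + 2 * log⁺ ‖x - y‖⁻¹) := by
  have hx0 : 0 < ‖x‖ := by linarith
  have hy1 : 1 ≤ (1 + ‖y‖) ^ ε := one_le_rpow (by simp) hε0.le
  have hS : 0 ≤ log⁺ ‖x - y‖⁻¹ := posLog_nonneg
  rcases le_total (2 * ‖y‖) ‖x‖ with hy | hy
  · calc |log ‖x - y‖ - log ‖x‖| ≤ 2 * (‖y‖ / ‖x‖) ^ δ :=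
          abs_log_norm_sub_sub_log_norm_le_of_two_mul_norm_le hδ1 hx0 hy
      _ = ‖x‖ ^ (-δ) * ‖y‖ ^ δ * 2 := by
          rw [div_rpow (norm_nonneg _) hx0.le, rpow_neg hx0.le]; ring
      _ ≤ ‖x‖ ^ (-δ) * (1 + ‖y‖) ^ δ * (10 / ε * (1 + ‖y‖) ^ ε + 2 * log⁺ ‖x - y‖⁻¹) := by
          gcongr
          · linarith
          · have : 10 ≤ 10 / ε := by rw [le_div_iff₀ hε0]; linarith
            nlinarith
  · have hhalf : 1 ≤ 2 * (‖x‖ ^ (-δ) * (1 + ‖y‖) ^ δ) := by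
      have h2 : ‖x‖ ^ δ ≤ 2 * (1 + ‖y‖) ^ δ := calc
        ‖x‖ ^ δ ≤ (2 * (1 + ‖y‖)) ^ δ := by gcongr; linarith
        _ = 2 ^ δ * (1 + ‖y‖) ^ δ := mul_rpow (by norm_num) (by positivity)
        _ ≤ 2 * (1 + ‖y‖) ^ δ := by gcongr; exact rpow_le_self_of_one_le one_le_two hδ1
      rw [rpow_neg hx0.le, inv_mul_eq_div, ← mul_div_assoc, le_div_iff₀ (by positivity)]
      linarith
    calc |log ‖x - y‖ - log ‖x‖| ≤ 5 * (1 + ‖y‖) ^ ε / ε + log⁺ ‖x - y‖⁻¹ :=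
          abs_log_norm_sub_sub_log_norm_le_of_norm_le_two_mul hε0 hε1 hx hy
      _ ≤ 2 * (‖x‖ ^ (-δ) * (1 + ‖y‖) ^ δ) * (5 * (1 + ‖y‖) ^ ε / ε + log⁺ ‖x - y‖⁻¹) :=
          le_mul_of_one_le_left (by positivity) hhalf
      _ = _ := by ring

lemma norm_log_norm_sub_sub_log_norm_mul_le {v C₀ p : ℝ} (hδ0 : 0 ≤ δ) (hδ1 : δ ≤ 1)
    (hε0 : 0 < ε) (hε1 : ε ≤ 1) (hp : p + δ ≤ 0) (hx : 1 ≤ ‖x‖)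
    (hv : |v| ≤ C₀ * (1 + ‖y‖) ^ p) :
    ‖(log ‖x - y‖ - log ‖x‖) * v‖ ≤
      ‖x‖ ^ (-δ) * C₀ * (10 / ε * (1 + ‖y‖) ^ (p + δ + ε) + 2 * log⁺ ‖x - y‖⁻¹) := by
  have hw : 0 < 1 + ‖y‖ := by positivity
  have hC₀ : 0 ≤ C₀ :=
    (mul_nonneg_iff_of_pos_right (rpow_pos_of_pos hw p)).1 ((abs_nonneg v).trans hv)
  have hS : 0 ≤ log⁺ ‖x - y‖⁻¹ := posLog_nonneg
  have hweight : (1 + ‖y‖) ^ (p + δ) ≤ 1 := rpow_le_one_of_one_le_of_nonpos (by simp) hp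
  calc ‖(log ‖x - y‖ - log ‖x‖) * v‖ = |log ‖x - y‖ - log ‖x‖| * |v| := by
        rw [norm_mul, norm_eq_abs, norm_eq_abs]
    _ ≤ ‖x‖ ^ (-δ) * (1 + ‖y‖) ^ δ * (10 / ε * (1 + ‖y‖) ^ ε + 2 * log⁺ ‖x - y‖⁻¹) *
          (C₀ * (1 + ‖y‖) ^ p) :=
        mul_le_mul (abs_log_norm_sub_sub_log_norm_le hδ0 hδ1 hε0 hε1 hx) hv (abs_nonneg _)
          (by positivity)
    _ = ‖x‖ ^ (-δ) * C₀ * (10 / ε * (1 + ‖y‖) ^ (p + δ + ε) +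
          2 * ((1 + ‖y‖) ^ (p + δ) * log⁺ ‖x - y‖⁻¹)) := by
        rw [rpow_add hw, rpow_add hw]; ring
    _ ≤ ‖x‖ ^ (-δ) * C₀ * (10 / ε * (1 + ‖y‖) ^ (p + δ + ε) + 2 * log⁺ ‖x - y‖⁻¹) := by
        gcongr
        exact mul_le_of_le_one_left hS hweight

end NormedGroup

section Haar

variable {E : Type*} [NormedAddCommGroup E] [NormedSpace ℝ E] [FiniteDimensional ℝ E]
  [MeasurableSpace E] [BorelSpace E] [Nontrivial E] {μ : Measure E} [μ.IsAddHaarMeasure]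

lemma integrable_posLog_inv_norm : Integrable (fun z : E => log⁺ ‖z‖⁻¹) μ := by
  have hmeas : AEStronglyMeasurable (fun z : E => log⁺ ‖z‖⁻¹) μ :=
    (continuous_posLog.measurable.comp measurable_norm.inv).aestronglyMeasurable
  have hd : 1 ≤ Module.finrank ℝ E := Module.finrank_pos
  have hdecay (z : E) : ‖log⁺ ‖z‖⁻¹‖ ≤ 2 * ‖z‖ ^ (-(1 / 2 : ℝ)) := by
    rw [norm_of_nonneg posLog_nonneg]
    calc log⁺ ‖z‖⁻¹ ≤ ‖z‖⁻¹ ^ (1 / 2 : ℝ) / (1 / 2) :=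
          posLog_le_rpow_div (by positivity) (by norm_num)
      _ = 2 * ‖z‖ ^ (-(1 / 2 : ℝ)) := by
        rw [inv_rpow (norm_nonneg _), rpow_neg (norm_nonneg _)]; ring
  refine (integrableOn_ball_of_norm_le_rpow (r := 1) hd ?_ (ae_of_all _ hdecay)
    hmeas).integrable_of_forall_notMem_eq_zero fun z hz => ?_
  · have : (1 : ℝ) ≤ Module.finrank ℝ E := by exact_mod_cast hd
    linarith
  · rw [posLog_eq_zero_iff, abs_inv, abs_norm]
    exact inv_le_one_of_one_le₀ (by simpa using hz)

theorem exists_abs_integral_log_norm_sub_sub_log_norm_mul_le {f : E → ℝ}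
    (hf : AEStronglyMeasurable f μ) {C₀ p δ : ℝ} (hδ0 : 0 ≤ δ) (hδ1 : δ ≤ 1)
    (hp : δ + Module.finrank ℝ E < -p) (hbd : ∀ y, |f y| ≤ C₀ * (1 + ‖y‖) ^ p) :
    ∃ C > 0, ∀ x : E, 1 ≤ ‖x‖ →
      Integrable (fun y => (log ‖x - y‖ - log ‖x‖) * f y) μ ∧
      |∫ y, (log ‖x - y‖ - log ‖x‖) * f y ∂μ| ≤ C * ‖x‖ ^ (-δ) := by
  set ε := min 1 ((-p - δ - Module.finrank ℝ E) / 2)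
  have hε0 : 0 < ε := lt_min one_pos (by linarith)
  have hε1 : ε ≤ 1 := min_le_left _ _
  have hdecay : (Module.finrank ℝ E : ℝ) < -(p + δ + ε) := by
    linarith [min_le_right 1 ((-p - δ - Module.finrank ℝ E) / 2)]
  set h : E → ℝ := fun y => 10 / ε * (1 + ‖y‖) ^ (p + δ + ε)
  set S : E → ℝ := fun z => log⁺ ‖z‖⁻¹
  have hh : Integrable h μ := by
    simpa only [neg_neg] using (integrable_one_add_norm (μ := μ) hdecay).const_mul (10 / ε)
  have hS : Integrable S μ := integrable_posLog_inv_norm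
  refine ⟨max 1 (C₀ * (∫ y, h y ∂μ + 2 * ∫ z, S z ∂μ)), by positivity, fun x hx => ?_⟩
  set G : E → ℝ := fun y => ‖x‖ ^ (-δ) * C₀ * (h y + 2 * S (x - y))
  have hG : Integrable G μ := (hh.add ((hS.comp_sub_left x).const_mul 2)).const_mul _
  have hdom (y : E) : ‖(log ‖x - y‖ - log ‖x‖) * f y‖ ≤ G y :=
    norm_log_norm_sub_sub_log_norm_mul_le hδ0 hδ1 hε0 hε1 (by linarith) hx (hbd y)
  have hint : Integrable (fun y => (log ‖x - y‖ - log ‖x‖) * f y) μ :=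
    hG.mono' (((measurable_log.comp (measurable_const.sub measurable_id).norm).sub_const _
      ).aestronglyMeasurable.mul hf) (ae_of_all _ hdom)
  refine ⟨hint, ?_⟩
  calc |∫ y, (log ‖x - y‖ - log ‖x‖) * f y ∂μ| ≤ ∫ y, G y ∂μ :=
        norm_integral_le_of_norm_le hG (ae_of_all _ hdom)
    _ = C₀ * (∫ y, h y ∂μ + 2 * ∫ z, S z ∂μ) * ‖x‖ ^ (-δ) := by
        simp only [G]
        rw [integral_const_mul, integral_add hh ((hS.comp_sub_left x).const_mul 2),
          integral_const_mul 2, integral_sub_left_eq_self]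
        ring
    _ ≤ max 1 (C₀ * (∫ y, h y ∂μ + 2 * ∫ z, S z ∂μ)) * ‖x‖ ^ (-δ) := by
        gcongr
        exact le_max_right _ _

end Haar

theorem log_potential_estimate_general
    (τ C₀ : ℝ) (hτ : τ ∈ Set.Ioo (0:ℝ) 1)
    (f : EuclideanSpace ℝ (Fin 2) → ℝ) (hf : Measurable f)
    (hbd : ∀ y : EuclideanSpace ℝ (Fin 2), |f y| ≤ C₀ * (1 + ‖y‖) ^ (-2 - τ)) :
    ∀ δ ∈ Set.Ioo (0:ℝ) τ, ∃ C > (0:ℝ), ∀ x : EuclideanSpace ℝ (Fin 2), 2 ≤ ‖x‖ →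
      Integrable (fun y => (Real.log ‖x - y‖ - Real.log ‖x‖) * f y) ∧
      |∫ y, (Real.log ‖x - y‖ - Real.log ‖x‖) * f y| ≤ C * ‖x‖ ^ (-δ) := by
  rintro δ ⟨hδ0, hδτ⟩
  obtain ⟨C, hC, hest⟩ := exists_abs_integral_log_norm_sub_sub_log_norm_mul_le (μ := volume)
    hf.aestronglyMeasurable hδ0.le (by linarith [hτ.2])
    (by rw [finrank_euclideanSpace_fin]; push_cast; linarith) hbd
  exact ⟨C, hC, fun x hx => hest x (by linarith)⟩

theorem log_potential_estimate
    (τ C₀ : ℝ) (hτ : τ ∈ Set.Ioo (0:ℝ) 1) (hC₀ : 0 < C₀)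
    (f : EuclideanSpace ℝ (Fin 2) → ℝ) (hf : Measurable f)
    (hbd : ∀ y : EuclideanSpace ℝ (Fin 2), |f y| ≤ C₀ * (1 + ‖y‖) ^ (-2 - τ)) :
    ∀ δ ∈ Set.Ioo (0:ℝ) τ, ∃ C > (0:ℝ), ∀ x : EuclideanSpace ℝ (Fin 2), 2 ≤ ‖x‖ →
      Integrable (fun y => (Real.log ‖x - y‖ - Real.log ‖x‖) * f y) ∧
      |∫ y, (Real.log ‖x - y‖ - Real.log ‖x‖) * f y| ≤ C * ‖x‖ ^ (-δ) :=
  log_potential_estimate_general τ C₀ hτ f hf hbd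
end

section
/- Let n ≥ 1, let A = (a_{ij}) be a real n×n matrix, and let R > 0, M > 0. Then there exists L > 0, depending only on n, A, R and M, with the following property: if (u_1,…,u_n) and (v_1,…,v_n) are radial solutions of the Liouville system on (0,R] which extend continuously to [0,R], satisfy lim_{r→0+} r·u_i'(r) = lim_{r→0+} r·v_i'(r) = 0 for each i, and satisfy |u_i(r)| ≤ M and |v_i(r)| ≤ M for all r ∈ (0,R] and all i, then for every i and every r ∈ (0,R]: |u_i(r) − v_i(r)| ≤ L·∑_{j=1}^n |u_j(0) − v_j(0)|, where u_j(0), v_j(0) denote the continuous extensions at r = 0. -/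
open MeasureTheory Filter

open Set Real Topology

theorem abs_exp_sub_exp_le {a b M : ℝ} (ha : a ≤ M) (hb : b ≤ M) :
    |exp a - exp b| ≤ exp M * |a - b| := by
  have bound : ∀ x ∈ Iic M, ‖exp x‖ ≤ exp M := fun x hx => by
    rw [norm_of_nonneg (exp_pos x).le]
    exact exp_le_exp.2 hx
  simpa only [norm_eq_abs] using (convex_Iic M).norm_image_sub_le_of_norm_hasDerivWithin_le
    (fun x _ => (hasDerivAt_exp x).hasDerivWithinAt) bound hb ha

theorem abs_sum_mul_exp_sub_sum_mul_exp_le {ι : Type*} [Fintype ι] {M : ℝ} (a x y : ι → ℝ)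
    (hx : ∀ j, x j ≤ M) (hy : ∀ j, y j ≤ M) :
    |∑ j, a j * exp (x j) - ∑ j, a j * exp (y j)| ≤
      exp M * (∑ j, |a j|) * ∑ j, |x j - y j| := by
  rw [← Finset.sum_sub_distrib, mul_assoc, Finset.sum_mul, Finset.mul_sum]
  refine (Finset.abs_sum_le_sum_abs _ _).trans (Finset.sum_le_sum fun j _ => ?_)
  calc |a j * exp (x j) - a j * exp (y j)| = |a j| * |exp (x j) - exp (y j)| := by
        rw [← mul_sub, abs_mul]
    _ ≤ |a j| * (exp M * |x j - y j|) := by gcongr; exact abs_exp_sub_exp_le (hx j) (hy j)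
    _ ≤ exp M * (|a j| * ∑ k, |x k - y k|) := by
        rw [mul_left_comm]
        gcongr
        exact Finset.single_le_sum (f := fun k => |x k - y k|) (fun k _ => abs_nonneg _)
          (Finset.mem_univ j)

theorem le_mul_exp_of_le_add_mul_integral {W : ℝ → ℝ} {δ c a b : ℝ} (hc : 0 ≤ c)
    (hW : ContinuousOn W (Icc a b)) (h : ∀ x ∈ Icc a b, W x ≤ δ + c * ∫ t in a..x, W t) :
    ∀ x ∈ Icc a b, W x ≤ δ * exp (c * (x - a)) := by
  set G : ℝ → ℝ := fun x => ∫ t in a..x, W t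
  have hG : ∀ x ∈ Icc a b, HasDerivWithinAt G (W x) (Icc a b) x := fun x hx => by
    have : Fact (x ∈ Icc a b) := ⟨hx⟩
    exact intervalIntegral.integral_hasDerivWithinAt_right
      ((hW.mono (Icc_subset_Icc_right hx.2)).intervalIntegrable_of_Icc hx.1)
      (hW.stronglyMeasurableAtFilter_nhdsWithin measurableSet_Icc x) (hW x hx)
  have hG_le : ∀ x ∈ Icc a b, G x ≤ gronwallBound 0 c δ (x - a) :=
    le_gronwallBound_of_liminf_deriv_right_le (fun x hx => (hG x hx).continuousWithinAt)
      (fun x hx r hr => by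
        simpa only [slope_def_field, div_eq_inv_mul] using
          ((hG x (Ico_subset_Icc_self hx)).mono_of_mem_nhdsWithin
            (Icc_mem_nhdsGE_of_mem hx)).liminf_right_slope_le hr)
      (by simp [G]) (fun x hx => (h x (Ico_subset_Icc_self hx)).trans_eq (add_comm _ _))
  intro x hx
  calc W x ≤ δ + c * G x := h x hx
    _ ≤ δ + c * gronwallBound 0 c δ (x - a) := by gcongr; exact hG_le x hx
    _ = δ * exp (c * (x - a)) := by
        rcases hc.eq_or_lt with rfl | hc0
        · simp
        · rw [gronwallBound_of_K_ne_0 hc0.ne']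
          field_simp
          ring

theorem abs_sub_le_mul_integral_of_hasDerivAt {φ g B : ℝ → ℝ} {r : ℝ} (hr : 0 ≤ r)
    (hφ₀ : ContinuousWithinAt φ (Ioi 0) 0) (hφ : ∀ t ∈ Ioc 0 r, HasDerivAt φ (t * g t) t)
    (hg : ContinuousOn g (Icc 0 r)) (hB : ContinuousOn B (Icc 0 r))
    (hgB : ∀ t ∈ Ioc 0 r, |g t| ≤ B t) :
    |φ r - φ 0| ≤ r * ∫ t in 0..r, B t := by
  have hcont : ContinuousOn φ (Icc 0 r) := fun t ht => by
    rcases ht.1.eq_or_lt with rfl | ht₀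
    · exact (continuousWithinAt_Ioi_iff_Ici.1 hφ₀).mono Icc_subset_Ici_self
    · exact (hφ t ⟨ht₀, ht.2⟩).continuousAt.continuousWithinAt
  rw [← intervalIntegral.integral_eq_sub_of_hasDeriv_right_of_le hr hcont
      (fun t ht => (hφ t (Ioo_subset_Ioc_self ht)).hasDerivWithinAt)
      ((continuousOn_id.mul hg).intervalIntegrable_of_Icc hr),
    ← intervalIntegral.integral_const_mul]
  refine (intervalIntegral.abs_integral_le_integral_abs hr).trans
    (intervalIntegral.integral_mono_on_of_le_Ioo hr
      ((continuousOn_id.mul hg).abs.intervalIntegrable_of_Icc hr)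
      ((continuousOn_const.mul hB).intervalIntegrable_of_Icc hr) fun t ht => ?_)
  rw [abs_mul, abs_of_pos ht.1]
  exact mul_le_mul ht.2.le (hgB t (Ioo_subset_Ioc_self ht)) (abs_nonneg _) hr

theorem IsRadialSolution.hasDerivAt_mul_deriv_s7 {n : ℕ} {A : Fin n → Fin n → ℝ}
    {u : Fin n → ℝ → ℝ} {J : Set ℝ} (hu : IsRadialSolution A u J) (i : Fin n) {r : ℝ}
    (hr : r ∈ J) (hr₀ : r ≠ 0) :
    HasDerivAt (fun s => s * deriv (u i) s) (r * -∑ j, A i j * exp (u j r)) r := by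
  obtain ⟨-, hdu, heq⟩ := hu i r hr
  refine ((hasDerivAt_id' r).mul hdu.hasDerivAt).congr_deriv ?_
  rw [← heq]
  field_simp
  ring

structure IsRegularRadialSolution {n : ℕ} (A : Fin n → Fin n → ℝ) (R : ℝ)
    (u : Fin n → ℝ → ℝ) : Prop where
  isRadialSolution : IsRadialSolution A u (Ioc 0 R)
  continuousOn : ∀ i, ContinuousOn (u i) (Icc 0 R)
  tendsto_mul_deriv : ∀ i, Tendsto (fun r => r * deriv (u i) r) (𝓝[>] 0) (𝓝 0)

namespace IsRegularRadialSolution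

variable {n : ℕ} {A : Fin n → Fin n → ℝ} {R C : ℝ} {u v : Fin n → ℝ → ℝ} {W : ℝ → ℝ}

theorem abs_deriv_sub_deriv_le (hu : IsRegularRadialSolution A R u)
    (hv : IsRegularRadialSolution A R v) (i : Fin n) (hW : ContinuousOn W (Icc 0 R))
    (hlip : ∀ t ∈ Ioc 0 R,
      |∑ j, A i j * exp (u j t) - ∑ j, A i j * exp (v j t)| ≤ C * W t)
    {r : ℝ} (hr : r ∈ Ioc 0 R) :
    |deriv (u i) r - deriv (v i) r| ≤ C * ∫ t in 0..r, W t := by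
  have hsub : Icc 0 r ⊆ Icc 0 R := Icc_subset_Icc_right hr.2
  have key := abs_sub_le_mul_integral_of_hasDerivAt
    (φ := fun s => s * deriv (u i) s - s * deriv (v i) s)
    (g := fun t => ∑ j, A i j * exp (v j t) - ∑ j, A i j * exp (u j t))
    (B := fun t => C * W t) hr.1.le
    (by simpa [ContinuousWithinAt] using (hu.tendsto_mul_deriv i).sub (hv.tendsto_mul_deriv i))
    (fun t ht => by
      have ht' : t ∈ Ioc 0 R := ⟨ht.1, ht.2.trans hr.2⟩
      exact ((hu.isRadialSolution.hasDerivAt_mul_deriv_s7 i ht' ht.1.ne').sub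
        (hv.isRadialSolution.hasDerivAt_mul_deriv_s7 i ht' ht.1.ne')).congr_deriv (by ring))
    (((continuousOn_finsetSum _ fun j _ => continuousOn_const.mul (hv.continuousOn j).rexp).sub
      (continuousOn_finsetSum _ fun j _ => continuousOn_const.mul (hu.continuousOn j).rexp)).mono
        hsub)
    ((continuousOn_const.mul hW).mono hsub)
    (fun t ht => by rw [abs_sub_comm]; exact hlip t ⟨ht.1, ht.2.trans hr.2⟩)
  rw [intervalIntegral.integral_const_mul, zero_mul, zero_mul, sub_zero, sub_zero, ← mul_sub,
    abs_mul, abs_of_pos hr.1] at key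
  exact le_of_mul_le_mul_left key hr.1

theorem abs_sub_le_add_mul_integral (hu : IsRegularRadialSolution A R u)
    (hv : IsRegularRadialSolution A R v) (i : Fin n) (hC : 0 ≤ C)
    (hW : ContinuousOn W (Icc 0 R)) (hW₀ : ∀ t ∈ Icc 0 R, 0 ≤ W t)
    (hlip : ∀ t ∈ Ioc 0 R,
      |∑ j, A i j * exp (u j t) - ∑ j, A i j * exp (v j t)| ≤ C * W t)
    {r : ℝ} (hr : r ∈ Icc 0 R) :
    |u i r - v i r| ≤ |u i 0 - v i 0| + R * (C * ∫ t in 0..r, W t) := by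
  rcases hr.1.eq_or_lt with rfl | hr₀
  · simp
  have hsub : Icc 0 r ⊆ Icc 0 R := Icc_subset_Icc_right hr.2
  obtain ⟨c, hc, hslope⟩ := exists_hasDerivAt_eq_slope (fun s => u i s - v i s)
    (fun s => deriv (u i) s - deriv (v i) s) hr₀
    (((hu.continuousOn i).sub (hv.continuousOn i)).mono hsub) fun s hs => by
      have hs' : s ∈ Ioc 0 R := ⟨hs.1, hs.2.le.trans hr.2⟩
      exact ((hu.isRadialSolution i s hs').1.hasDerivAt).sub
        ((hv.isRadialSolution i s hs').1.hasDerivAt)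
  rw [sub_zero, eq_div_iff hr₀.ne'] at hslope
  have hderiv : |deriv (u i) c - deriv (v i) c| ≤ C * ∫ t in 0..r, W t := by
    refine (hu.abs_deriv_sub_deriv_le hv i hW hlip ⟨hc.1, hc.2.le.trans hr.2⟩).trans ?_
    gcongr
    exact intervalIntegral.integral_mono_interval le_rfl hc.1.le hc.2.le
      ((ae_restrict_mem measurableSet_Ioc).mono fun t ht => hW₀ t ⟨ht.1.le, ht.2.trans hr.2⟩)
      ((hW.mono hsub).intervalIntegrable_of_Icc hr₀.le)
  calc |u i r - v i r| ≤ |u i 0 - v i 0| + |(u i r - v i r) - (u i 0 - v i 0)| :=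
        sub_le_iff_le_add'.1 (abs_sub_abs_le_abs_sub _ _)
    _ = |u i 0 - v i 0| + r * |deriv (u i) c - deriv (v i) c| := by
        rw [← hslope, abs_mul, abs_of_pos hr₀, mul_comm]
    _ ≤ |u i 0 - v i 0| + R * (C * ∫ t in 0..r, W t) := by
        grw [mul_le_mul hr.2 hderiv (abs_nonneg _) (hr₀.le.trans hr.2)]

theorem continuousOn_sum_abs_sub (hu : IsRegularRadialSolution A R u)
    (hv : IsRegularRadialSolution A R v) :
    ContinuousOn (fun t => ∑ j, |u j t - v j t|) (Icc 0 R) :=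
  continuousOn_finsetSum _ fun j _ => ((hu.continuousOn j).sub (hv.continuousOn j)).abs

theorem sum_abs_sub_le_add_mul_integral (hu : IsRegularRadialSolution A R u)
    (hv : IsRegularRadialSolution A R v) (hC : 0 ≤ C)
    (hlip : ∀ i, ∀ t ∈ Ioc 0 R, |∑ j, A i j * exp (u j t) - ∑ j, A i j * exp (v j t)| ≤
      C * ∑ j, |u j t - v j t|)
    {r : ℝ} (hr : r ∈ Icc 0 R) :
    ∑ j, |u j r - v j r| ≤
      ∑ j, |u j 0 - v j 0| + n * R * C * ∫ t in 0..r, ∑ j, |u j t - v j t| :=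
  calc ∑ j, |u j r - v j r|
      ≤ ∑ j, (|u j 0 - v j 0| + R * (C * ∫ t in 0..r, ∑ k, |u k t - v k t|)) :=
        Finset.sum_le_sum fun j _ => hu.abs_sub_le_add_mul_integral hv j hC
          (hu.continuousOn_sum_abs_sub hv) (fun t _ => by positivity) (hlip j) hr
    _ = ∑ j, |u j 0 - v j 0| + n * R * C * ∫ t in 0..r, ∑ j, |u j t - v j t| := by
        simp only [Finset.sum_add_distrib, Finset.sum_const, Finset.card_univ, Fintype.card_fin,
          nsmul_eq_mul]
        ring

end IsRegularRadialSolution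

theorem continuous_dependence_on_initial_data_general
    (n : ℕ) (A : Fin n → Fin n → ℝ) (R M : ℝ) (hR : 0 < R) :
    ∃ L > (0:ℝ), ∀ u v : Fin n → ℝ → ℝ,
      IsRadialSolution A u (Set.Ioc 0 R) → IsRadialSolution A v (Set.Ioc 0 R) →
      (∀ i, ContinuousOn (u i) (Set.Icc 0 R)) → (∀ i, ContinuousOn (v i) (Set.Icc 0 R)) →
      (∀ i, Tendsto (fun r => r * deriv (u i) r) (nhdsWithin 0 (Set.Ioi 0)) (nhds 0)) →
      (∀ i, Tendsto (fun r => r * deriv (v i) r) (nhdsWithin 0 (Set.Ioi 0)) (nhds 0)) →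
      (∀ i, ∀ r ∈ Set.Ioc 0 R, |u i r| ≤ M) →
      (∀ i, ∀ r ∈ Set.Ioc 0 R, |v i r| ≤ M) →
      ∀ i, ∀ r ∈ Set.Ioc 0 R, |u i r - v i r| ≤ L * ∑ j, |u j 0 - v j 0| := by
  set C := exp M * ∑ i, ∑ j, |A i j|
  refine ⟨exp (n * R * C * R), exp_pos _, fun u v hu hv hcu hcv htu htv hbu hbv i r hr => ?_⟩
  have hu' : IsRegularRadialSolution A R u := ⟨hu, hcu, htu⟩
  have hv' : IsRegularRadialSolution A R v := ⟨hv, hcv, htv⟩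
  have hlip : ∀ i, ∀ t ∈ Ioc 0 R, |∑ j, A i j * exp (u j t) - ∑ j, A i j * exp (v j t)| ≤
      C * ∑ j, |u j t - v j t| := fun i t ht =>
    (abs_sum_mul_exp_sub_sum_mul_exp_le _ _ _ (fun j => (abs_le.1 (hbu j t ht)).2)
      (fun j => (abs_le.1 (hbv j t ht)).2)).trans (by
        gcongr
        exact mul_le_mul_of_nonneg_left (Finset.single_le_sum (f := fun i => ∑ j, |A i j|)
          (fun i _ => by positivity) (Finset.mem_univ i)) (exp_pos M).le)
  have hgronwall := le_mul_exp_of_le_add_mul_integral (by positivity)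
    (hu'.continuousOn_sum_abs_sub hv')
    (fun t ht => hu'.sum_abs_sub_le_add_mul_integral hv' (by positivity) hlip ht) r ⟨hr.1.le, hr.2⟩
  calc |u i r - v i r| ≤ ∑ j, |u j r - v j r| :=
        Finset.single_le_sum (f := fun j => |u j r - v j r|) (fun j _ => abs_nonneg _)
          (Finset.mem_univ i)
    _ ≤ exp (n * R * C * R) * ∑ j, |u j 0 - v j 0| := by
        grw [hgronwall, mul_comm, sub_zero, hr.2]

theorem continuous_dependence_on_initial_data
    (n : ℕ) (hn : 1 ≤ n) (A : Fin n → Fin n → ℝ) (R M : ℝ) (hR : 0 < R) (hM : 0 < M) :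
    ∃ L > (0:ℝ), ∀ u v : Fin n → ℝ → ℝ,
      IsRadialSolution A u (Set.Ioc 0 R) → IsRadialSolution A v (Set.Ioc 0 R) →
      (∀ i, ContinuousOn (u i) (Set.Icc 0 R)) → (∀ i, ContinuousOn (v i) (Set.Icc 0 R)) →
      (∀ i, Tendsto (fun r => r * deriv (u i) r) (nhdsWithin 0 (Set.Ioi 0)) (nhds 0)) →
      (∀ i, Tendsto (fun r => r * deriv (v i) r) (nhdsWithin 0 (Set.Ioi 0)) (nhds 0)) →
      (∀ i, ∀ r ∈ Set.Ioc 0 R, |u i r| ≤ M) →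
      (∀ i, ∀ r ∈ Set.Ioc 0 R, |v i r| ≤ M) →
      ∀ i, ∀ r ∈ Set.Ioc 0 R, |u i r - v i r| ≤ L * ∑ j, |u j 0 - v j 0| :=
  continuous_dependence_on_initial_data_general n A R M hR
end
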